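/- Let m ≥ 0 and let M(λ) be the (2m+1) × (2m+1) Kronecker-block matrix. Let N ≥ 1, let λ : Fin N → ℂ be injective (N distinct values), and let v : Fin N → (Fin m ⊕ Fin (m+1) → ℂ) be such that for every i, v(i) ≠ 0 and M(λ(i)).mulVec (v(i)) = 0. Then the family (v(i)) is linearly independent over ℂ if and only if N ≤ m + 1. (Proposition 2.4 of the paper: for the (2k−1) × (2k−1) Kronecker block, nonzero vectors in Ker A_{λᵢ} for N distinct values λᵢ are linearly independent if and only if N ≤ k, where k = m+1 is the Kronecker index.) -/

import Mathlib

/-- The `m × (m+1)` matrix `P(λ)` with `P(λ)(i,i) = 1`, `P(λ)(i,i+1) = λ` and all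
other entries `0`. -/
def Pmat (m : ℕ) (lam : ℂ) : Matrix (Fin m) (Fin (m + 1)) ℂ :=
  fun i j =>
    if (j : ℕ) = (i : ℕ) then 1 else if (j : ℕ) = (i : ℕ) + 1 then lam else 0

/-- The `(2m+1) × (2m+1)` Kronecker block `A + λB` in block form. -/
def Mk (m : ℕ) (lam : ℂ) :
    Matrix (Fin m ⊕ Fin (m + 1)) (Fin m ⊕ Fin (m + 1)) ℂ :=
  Matrix.fromBlocks 0 (Pmat m lam) (-(Pmat m lam).transpose) 0

/-!
A kernel vector `(x, y)` of `M(λ)` has `x = 0`, since the first `m` columns of `P(λ)` form a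
unitriangular matrix, and `y` solves the recursion `y j + λ y (j+1) = 0`, so
`y j = (-λ)^(m-j) y m`. Hence nonzero kernel vectors for `λ₁, …, λ_N` are nonzero multiples of
the reversed rows of an `N × (m+1)` Vandermonde matrix in the distinct nodes `-λᵢ`, and these
are independent exactly when `N ≤ m + 1`.
-/

open Matrix

theorem Pmat_mulVec_apply (m : ℕ) (lam : ℂ) (y : Fin (m + 1) → ℂ) (i : Fin m) :
    (Pmat m lam *ᵥ y) i = y i.castSucc + lam * y i.succ := by
  have hterm : ∀ j : Fin (m + 1), Pmat m lam i j * y j =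
      (if j = i.castSucc then y j else 0) + (if j = i.succ then lam * y j else 0) := by
    intro j
    simp only [Pmat, Fin.ext_iff, Fin.val_castSucc, Fin.val_succ]
    split_ifs <;> first | omega | ring
  simp [mulVec, dotProduct, hterm, Finset.sum_add_distrib]

theorem eq_smul_of_Pmat_mulVec_eq_zero {m : ℕ} {lam : ℂ} {y : Fin (m + 1) → ℂ}
    (hy : Pmat m lam *ᵥ y = 0) :
    y = y (Fin.last m) • fun j => (-lam) ^ (j.rev : ℕ) := by
  funext j
  induction j using Fin.reverseInduction with
  | last => simp
  | cast i ih =>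
    have hi := congrFun hy i
    rw [Pmat_mulVec_apply, Pi.zero_apply] at hi
    simp only [Pi.smul_apply, smul_eq_mul, Fin.rev_castSucc, Fin.rev_succ, Fin.val_succ,
      Fin.val_castSucc] at ih ⊢
    rw [pow_succ]
    linear_combination hi - lam * ih

theorem Pmat_castSucc_isUpperTriangular (m : ℕ) (lam : ℂ) :
    ((Pmat m lam).submatrix id Fin.castSucc).IsUpperTriangular := by
  intro i j hji
  simp only [submatrix_apply, id, Pmat, Fin.val_castSucc]
  have : (j : ℕ) < i := hji
  rw [if_neg (by omega), if_neg (by omega)]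

theorem det_Pmat_castSucc (m : ℕ) (lam : ℂ) :
    ((Pmat m lam).submatrix id Fin.castSucc).det = 1 := by
  rw [det_of_isUpperTriangular (Pmat_castSucc_isUpperTriangular m lam)]
  exact Finset.prod_eq_one fun i _ => by simp [Pmat]

theorem eq_zero_of_vecMul_Pmat_eq_zero {m : ℕ} {lam : ℂ} {x : Fin m → ℂ}
    (hx : x ᵥ* Pmat m lam = 0) : x = 0 :=
  eq_zero_of_vecMul_eq_zero (M := (Pmat m lam).submatrix id Fin.castSucc)
    (by rw [det_Pmat_castSucc]; exact one_ne_zero)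
    (funext fun k => congrFun hx k.castSucc)

def kronKerVec (m : ℕ) (lam : ℂ) : Fin m ⊕ Fin (m + 1) → ℂ :=
  Sum.elim 0 fun j => (-lam) ^ (j.rev : ℕ)

theorem eq_smul_kronKerVec_of_Mk_mulVec_eq_zero {m : ℕ} {lam : ℂ} {w : Fin m ⊕ Fin (m + 1) → ℂ}
    (hw : Mk m lam *ᵥ w = 0) : w = w (Sum.inr (Fin.last m)) • kronKerVec m lam := by
  rw [Mk, fromBlocks_mulVec] at hw
  have hx : w ∘ Sum.inl = 0 := by
    refine eq_zero_of_vecMul_Pmat_eq_zero (lam := lam) ?_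
    simpa [neg_mulVec, mulVec_transpose] using congrArg (· ∘ Sum.inr) hw
  have hy := eq_smul_of_Pmat_mulVec_eq_zero (y := w ∘ Sum.inr) (lam := lam)
    (by simpa using congrArg (· ∘ Sum.inl) hw)
  ext (a | j)
  · simpa [kronKerVec] using congrFun hx a
  · simpa [kronKerVec] using congrFun hy j

theorem linearIndependent_sumElim_zero_iff {ι α β R M : Type*} [Ring R] [AddCommGroup M]
    [Module R M] (u : ι → β → M) :
    LinearIndependent R (fun i => Sum.elim (0 : α → M) (u i)) ↔ LinearIndependent R u :=
  ((LinearEquiv.sumArrowLequivProdArrow α β R M).symm.toLinearMap ∘ₗ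
    LinearMap.inr R (α → M) (β → M)).linearIndependent_iff (by simp [LinearMap.ker_comp])

theorem linearIndependent_pow_rev_iff {K : Type*} [Field K] {N n : ℕ} {μ : Fin N → K}
    (hμ : Function.Injective μ) :
    LinearIndependent K (fun i (j : Fin n) => μ i ^ (j.rev : ℕ)) ↔ N ≤ n := by
  refine ⟨fun h => by simpa using h.fintype_card_le_finrank, fun hNn => ?_⟩
  let restrict := LinearMap.funLeft K K fun k : Fin N => (Fin.castLE hNn k).rev
  have hrows : restrict ∘ (fun i (j : Fin n) => μ i ^ (j.rev : ℕ)) = fun i => vandermonde μ i := by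
    ext i k
    simp only [restrict, Function.comp_apply, LinearMap.funLeft_apply, Fin.rev_rev,
      Fin.val_castLE, vandermonde_apply]
  refine .of_comp restrict ?_
  rw [hrows]
  exact linearIndependent_rows_of_det_ne_zero (det_vandermonde_ne_zero_iff.mpr hμ)

theorem stmt_10_general (m N : ℕ) (lam : Fin N → ℂ)
    (hinj : Function.Injective lam)
    (v : Fin N → (Fin m ⊕ Fin (m + 1) → ℂ))
    (hv0 : ∀ i, v i ≠ 0)
    (hker : ∀ i, (Mk m (lam i)).mulVec (v i) = 0) :
    LinearIndependent ℂ v ↔ N ≤ m + 1 := by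
  have hscalar := fun i => eq_smul_kronKerVec_of_Mk_mulVec_eq_zero (hker i)
  have hc : ∀ i, v i (Sum.inr (Fin.last m)) ≠ 0 := fun i h =>
    hv0 i (by rw [hscalar i, h, zero_smul])
  have hv : v = (fun i => Units.mk0 _ (hc i)) • fun i => kronKerVec m (lam i) := funext hscalar
  rw [hv, LinearIndependent.units_smul_iff]
  unfold kronKerVec
  rw [linearIndependent_sumElim_zero_iff]
  exact linearIndependent_pow_rev_iff (neg_injective.comp hinj)

/-- Proposition 2.4: nonzero kernel vectors of the `(2m+1) × (2m+1)` Kronecker block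
for `N` distinct values `λᵢ` are linearly independent iff `N ≤ m + 1` (the Kronecker
index). -/
theorem stmt_10 (m N : ℕ) (hN : 1 ≤ N) (lam : Fin N → ℂ)
    (hinj : Function.Injective lam)
    (v : Fin N → (Fin m ⊕ Fin (m + 1) → ℂ))
    (hv0 : ∀ i, v i ≠ 0)
    (hker : ∀ i, (Mk m (lam i)).mulVec (v i) = 0) :
    LinearIndependent ℂ v ↔ N ≤ m + 1 :=
  stmt_10_general m N lam hinj v hv0 hker
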